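/- arXiv:2502.13583 — 2 statements merged into one kernel-verified Lean document; each statement's English description precedes it below -/
import Mathlib

section
/- Let A ∈ ℝ^{n×d}, C ∈ ℝ^{d×d} positive semidefinite with H = AᵀA + C positive definite, and set A_C = A H^{-1/2}. If (1+ε)⁻¹ A_Cᵀ A_C ⪯ M ⪯ (1+ε) A_Cᵀ A_C for a symmetric matrix M and ε > 0, then (1+ε)⁻¹ H ⪯ H^{1/2} M H^{1/2} + C ⪯ (1+ε) H, and consequently (1+ε)⁻¹ H⁻¹ ⪯ (H^{1/2} M H^{1/2} + C)⁻¹ ⪯ (1+ε) H⁻¹. -/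
open Matrix

section

open scoped ComplexOrder

/-- The square root of a positive semidefinite matrix, with the definition it had in Mathlib
(December 2024), where it has since been removed. -/
noncomputable def Matrix.PosSemidef.sqrt {n 𝕜 : Type*} [Fintype n] [RCLike 𝕜] [DecidableEq n]
    {A : Matrix n n 𝕜} (hA : A.PosSemidef) : Matrix n n 𝕜 :=
  hA.1.eigenvectorUnitary.1 * diagonal ((↑) ∘ (√·) ∘ hA.1.eigenvalues) *
  (star hA.1.eigenvectorUnitary : Matrix n n 𝕜)

end

/-!
Conjugating the hypothesis by `H^{1/2}` turns `A_Cᵀ A_C` into `AᵀA`. Adding the regularizer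
`C ⪰ 0` to both sides preserves a two-sided approximation with factor `1 + ε ≥ 1`, because
`(1 + ε)⁻¹ C ⪯ C ⪯ (1 + ε) C`; this gives the bounds for `H`. Matrix inversion reverses the
Loewner order on positive definite matrices (for `X ⪯ Y` the block matrix `[Y 1; 1 X⁻¹]` has
Schur complements `Y - X` and `X⁻¹ - Y⁻¹`, so both are positive semidefinite together), and this
turns the bounds for `H` into those for `H⁻¹`.
-/

open scoped MatrixOrder ComplexOrder

/-- `Y` is an `ε`-approximation of `X` in the Loewner order. -/
def IsLoewnerApprox {E : Type*} [LE E] [SMul ℝ E] (ε : ℝ) (X Y : E) : Prop :=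
  (1 + ε)⁻¹ • X ≤ Y ∧ Y ≤ (1 + ε) • X

namespace IsLoewnerApprox

theorem add_nonneg {E : Type*} [AddCommGroup E] [PartialOrder E] [IsOrderedAddMonoid E]
    [Module ℝ E] [SMulPosMono ℝ E] {ε : ℝ} {X Y Z : E}
    (h : IsLoewnerApprox ε X Y) (hε : 0 ≤ ε) (hZ : 0 ≤ Z) :
    IsLoewnerApprox ε (X + Z) (Y + Z) := by
  have hc : 1 ≤ 1 + ε := le_add_of_nonneg_right hε
  constructor
  · rw [smul_add]
    exact add_le_add h.1 (smul_le_of_le_one_left hZ (inv_le_one_of_one_le₀ hc))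
  · rw [smul_add]
    exact add_le_add h.2 (le_smul_of_one_le_left hZ hc)

theorem star_conj {R : Type*} [NonUnitalSemiring R] [PartialOrder R] [StarRing R]
    [StarOrderedRing R] [SMul ℝ R] [IsScalarTower ℝ R R] [SMulCommClass ℝ R R] {ε : ℝ} {X Y : R}
    (h : IsLoewnerApprox ε X Y) (S : R) :
    IsLoewnerApprox ε (star S * X * S) (star S * Y * S) := by
  constructor
  · simpa only [mul_smul_comm, smul_mul_assoc] using star_left_conjugate_le_conjugate h.1 S
  · simpa only [mul_smul_comm, smul_mul_assoc] using star_left_conjugate_le_conjugate h.2 S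

end IsLoewnerApprox

namespace Matrix

theorem PosDef.of_le {n 𝕜 : Type*} [RCLike 𝕜] {X Y : Matrix n n 𝕜} (hX : X.PosDef) (h : X ≤ Y) :
    Y.PosDef := by
  simpa using hX.add_posSemidef h

variable {n 𝕜 : Type*} [Fintype n] [DecidableEq n] [RCLike 𝕜]

theorem PosDef.inv_le_inv {X Y : Matrix n n 𝕜} (hX : X.PosDef) (h : X ≤ Y) : Y⁻¹ ≤ X⁻¹ := by
  have hY := hX.of_le h
  have := hY.isUnit.invertible
  have := hX.isUnit.invertible
  have := hX.inv.isUnit.invertible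
  have hblock : (fromBlocks Y 1 (1 : Matrix n n 𝕜)ᴴ X⁻¹).PosSemidef := by
    rw [PosDef.fromBlocks₂₂ _ _ hX.inv, conjTranspose_one, mul_one, one_mul, inv_inv_of_invertible]
    exact h
  rw [PosDef.fromBlocks₁₁ _ _ hY, conjTranspose_one, mul_one, one_mul] at hblock
  exact hblock

theorem inv_real_smul {X : Matrix n n 𝕜} (hX : IsUnit X.det) {c : ℝ} (hc : c ≠ 0) :
    (c • X)⁻¹ = c⁻¹ • X⁻¹ :=
  inv_eq_left_inv (by rw [smul_mul_smul_comm, inv_mul_cancel₀ hc, nonsing_inv_mul _ hX, one_smul])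

theorem PosSemidef.sqrt_eq_cfcSqrt {A : Matrix n n 𝕜} (hA : A.PosSemidef) :
    hA.sqrt = CFC.sqrt A := by
  rw [CFC.sqrt_eq_real_sqrt A hA.nonneg, cfcₙ_eq_cfc, hA.1.cfc_eq]
  rfl

theorem conj_gram_mul_nonsing_inv {m : Type*} [Fintype m] (A : Matrix m n 𝕜) {S : Matrix n n 𝕜}
    (hS : IsUnit S) : star S * ((A * S⁻¹)ᴴ * (A * S⁻¹)) * S = Aᴴ * A := by
  rw [star_eq_conjTranspose, ← Matrix.mul_assoc, ← conjTranspose_mul, Matrix.mul_assoc,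
    nonsing_inv_mul_cancel_right _ _ ((isUnit_iff_isUnit_det S).mp hS)]

end Matrix

theorem IsLoewnerApprox.inv {n 𝕜 : Type*} [Fintype n] [DecidableEq n] [RCLike 𝕜] {ε : ℝ}
    {X Y : Matrix n n 𝕜} (h : IsLoewnerApprox ε X Y) (hX : X.PosDef) (hε : 0 < 1 + ε) :
    IsLoewnerApprox ε X⁻¹ Y⁻¹ := by
  have hXdet : IsUnit X.det := (isUnit_iff_isUnit_det X).mp hX.isUnit
  have hXscaled : ((1 + ε)⁻¹ • X).PosDef := hX.smul (inv_pos.mpr hε)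
  have hY : Y.PosDef := hXscaled.of_le h.1
  constructor
  · simpa only [inv_real_smul hXdet hε.ne'] using hY.inv_le_inv h.2
  · simpa only [inv_real_smul hXdet (inv_ne_zero hε.ne'), inv_inv] using hXscaled.inv_le_inv h.1

theorem subspace_embedding_inversion_general {n d : ℕ}
    (A : Matrix (Fin n) (Fin d) ℝ) (C : Matrix (Fin d) (Fin d) ℝ)
    (hC : C.PosSemidef)
    (H : Matrix (Fin d) (Fin d) ℝ) (hHdef : H = Aᵀ * A + C) (hH : H.PosDef)
    (Hhalf : Matrix (Fin d) (Fin d) ℝ) (hHhalf : Hhalf = hH.posSemidef.sqrt)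
    (AC : Matrix (Fin n) (Fin d) ℝ) (hAC : AC = A * Hhalf⁻¹)
    (M : Matrix (Fin d) (Fin d) ℝ) (ε : ℝ) (hε : 0 < ε)
    (h1 : (M - (1 + ε)⁻¹ • (ACᵀ * AC)).PosSemidef)
    (h2 : ((1 + ε) • (ACᵀ * AC) - M).PosSemidef) :
    ((Hhalf * M * Hhalf + C - (1 + ε)⁻¹ • H).PosSemidef ∧
      ((1 + ε) • H - (Hhalf * M * Hhalf + C)).PosSemidef) ∧
    (((Hhalf * M * Hhalf + C)⁻¹ - (1 + ε)⁻¹ • H⁻¹).PosSemidef ∧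
      ((1 + ε) • H⁻¹ - (Hhalf * M * Hhalf + C)⁻¹).PosSemidef) := by
  have happrox : IsLoewnerApprox ε (ACᵀ * AC) M := ⟨h1, h2⟩
  have hsqrt : Hhalf = CFC.sqrt H := hHhalf.trans hH.posSemidef.sqrt_eq_cfcSqrt
  have hself : star Hhalf = Hhalf := hsqrt ▸ (CFC.sqrt_nonneg H).isSelfAdjoint.star_eq
  have hunit : IsUnit Hhalf :=
    hsqrt ▸ (CFC.isUnit_sqrt_iff H hH.posSemidef.nonneg).mpr hH.isUnit
  have hgram : Hhalf * (ACᵀ * AC) * Hhalf = Aᵀ * A := by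
    simpa only [hAC, hself, conjTranspose_eq_transpose_of_trivial] using
      conj_gram_mul_nonsing_inv A hunit
  have hK : IsLoewnerApprox ε H (Hhalf * M * Hhalf + C) := by
    simpa only [hself, hgram, ← hHdef] using
      (happrox.star_conj Hhalf).add_nonneg hε.le hC.nonneg
  exact ⟨hK, hK.inv hH (by linarith)⟩

/-- Lemma B.1: if a symmetric matrix `M` is an ε-approximation of the whitened
Gram matrix `A_Cᵀ A_C` (with `A_C = A H^{-1/2}`, `H = AᵀA + C`), then
`H^{1/2} M H^{1/2} + C` is an ε-approximation of `H`, and consequently its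
inverse is an ε-approximation of `H⁻¹`, in the Loewner order. -/
theorem subspace_embedding_inversion {n d : ℕ}
    (A : Matrix (Fin n) (Fin d) ℝ) (C : Matrix (Fin d) (Fin d) ℝ)
    (hC : C.PosSemidef)
    (H : Matrix (Fin d) (Fin d) ℝ) (hHdef : H = Aᵀ * A + C) (hH : H.PosDef)
    (Hhalf : Matrix (Fin d) (Fin d) ℝ) (hHhalf : Hhalf = hH.posSemidef.sqrt)
    (AC : Matrix (Fin n) (Fin d) ℝ) (hAC : AC = A * Hhalf⁻¹)
    (M : Matrix (Fin d) (Fin d) ℝ) (hM : M.IsSymm) (ε : ℝ) (hε : 0 < ε)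
    (h1 : (M - (1 + ε)⁻¹ • (ACᵀ * AC)).PosSemidef)
    (h2 : ((1 + ε) • (ACᵀ * AC) - M).PosSemidef) :
    ((Hhalf * M * Hhalf + C - (1 + ε)⁻¹ • H).PosSemidef ∧
      ((1 + ε) • H - (Hhalf * M * Hhalf + C)).PosSemidef) ∧
    (((Hhalf * M * Hhalf + C)⁻¹ - (1 + ε)⁻¹ • H⁻¹).PosSemidef ∧
      ((1 + ε) • H⁻¹ - (Hhalf * M * Hhalf + C)⁻¹).PosSemidef) :=
  subspace_embedding_inversion_general A C hC H hHdef hH Hhalf hHhalf AC hAC M ε hε h1 h2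
end

section
/- Let A ∈ ℝ^{n×d}, C p.s.d. with H = AᵀA + C positive definite, πᵢ > 0 with ∑πᵢ = 1, ℓᵢ = aᵢᵀH⁻¹aᵢ, d_eff = ∑ℓᵢ, ρ_max = maxᵢ ℓᵢ/(πᵢ d_eff), ρ_min = minᵢ ℓᵢ/(πᵢ d_eff), and m > 0. Suppose D = diag(D₁₁,…,D_nn) satisfies the fixed-point equations Dᵢᵢ = m/(m + aᵢᵀ(AᵀDA + C)⁻¹aᵢ/πᵢ) with all Dᵢᵢ ∈ (1/2, 1]. Then m/(m + 2ρ_max d_eff) ≤ Dᵢᵢ ≤ m/(m + ρ_min d_eff) for every i. -/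
/-!
With `H = AᵀA + C` and `B = AᵀDA + C`, the constraint `1/2 < Dᵢᵢ ≤ 1` gives `H ⪯ 2B` and
`B ⪯ H` in the Loewner order. Matrix inversion reverses that order, which is seen on quadratic forms
through `x ⬝ᵥ B⁻¹ *ᵥ x = max_y (2 y ⬝ᵥ x - y ⬝ᵥ B *ᵥ y)`; hence `ℓᵢ ≤ aᵢᵀB⁻¹aᵢ ≤ 2ℓᵢ`. Since
`ρ_min d_eff ≤ ℓᵢ/πᵢ ≤ ρ_max d_eff` and `x ↦ m/(m + x)` is decreasing, the fixed-point equation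
yields the two bounds.
-/

open Matrix

open scoped MatrixOrder

namespace Matrix

lemma PosDef.of_le_s17 {ι : Type*} {A B : Matrix ι ι ℝ} (hA : A.PosDef) (hAB : A ≤ B) : B.PosDef := by
  simpa using hA.add_posSemidef hAB

variable {ι κ : Type*} [Fintype ι] [Fintype κ] [DecidableEq κ] (A : Matrix κ ι ℝ)
  {C : Matrix ι ι ℝ} {D : κ → ℝ}

lemma transpose_mul_diagonal_mul_mono {f g : κ → ℝ} (hfg : f ≤ g) :
    Aᵀ * diagonal f * A ≤ Aᵀ * diagonal g * A := by
  rw [le_iff, ← Matrix.sub_mul, ← Matrix.mul_sub, diagonal_sub]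
  exact (PosSemidef.diagonal (sub_nonneg.2 hfg)).conjTranspose_mul_mul_same A

lemma transpose_mul_diagonal_mul_add_le (hD : ∀ j, D j ≤ 1) :
    Aᵀ * diagonal D * A + C ≤ Aᵀ * A + C := by
  gcongr
  simpa using transpose_mul_diagonal_mul_mono A (g := 1) hD

lemma le_two_smul_transpose_mul_diagonal_mul_add (hC : C.PosSemidef) (hD : ∀ j, 1 / 2 ≤ D j) :
    Aᵀ * A + C ≤ (2 : ℝ) • (Aᵀ * diagonal D * A + C) := calc
  Aᵀ * A + C ≤ Aᵀ * diagonal ((2 : ℝ) • D) * A + C := by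
    gcongr
    simpa using transpose_mul_diagonal_mul_mono A (f := 1) (g := (2 : ℝ) • D)
      fun j ↦ show 1 ≤ 2 * D j by linarith [hD j]
  _ ≤ Aᵀ * diagonal ((2 : ℝ) • D) * A + (C + C) := by
    gcongr
    exact le_add_of_nonneg_left hC.nonneg
  _ = (2 : ℝ) • (Aᵀ * diagonal D * A + C) := by
    rw [smul_add, diagonal_smul, Matrix.mul_smul, Matrix.smul_mul, two_smul ℝ C]

variable [DecidableEq ι]

lemma PosDef.two_mul_dotProduct_sub_le_dotProduct_inv_mulVec {B : Matrix ι ι ℝ} (hB : B.PosDef)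
    (x y : ι → ℝ) : 2 * (y ⬝ᵥ x) - y ⬝ᵥ B *ᵥ y ≤ x ⬝ᵥ B⁻¹ *ᵥ x := by
  set w := B⁻¹ *ᵥ x
  have hBw : B *ᵥ w = x := by
    simp [w, mulVec_mulVec, mul_nonsing_inv _ ((isUnit_iff_isUnit_det B).1 hB.isUnit)]
  have hBt : Bᵀ = B := by simpa using hB.isHermitian.eq
  have hwBy : w ⬝ᵥ B *ᵥ y = y ⬝ᵥ x := by
    rw [dotProduct_mulVec, ← mulVec_transpose, hBt, hBw, dotProduct_comm]
  have h0 : 0 ≤ (y - w) ⬝ᵥ B *ᵥ (y - w) := by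
    simpa using hB.posSemidef.dotProduct_mulVec_nonneg (y - w)
  have hexp : (y - w) ⬝ᵥ B *ᵥ (y - w) = y ⬝ᵥ B *ᵥ y - 2 * (y ⬝ᵥ x) + x ⬝ᵥ B⁻¹ *ᵥ x := by
    rw [mulVec_sub, dotProduct_sub, sub_dotProduct, sub_dotProduct, hBw, hwBy,
      dotProduct_comm w x]
    ring
  linarith

lemma PosDef.dotProduct_inv_mulVec_le_of_le {B H : Matrix ι ι ℝ} (hB : B.PosDef) (hBH : B ≤ H)
    (x : ι → ℝ) : x ⬝ᵥ H⁻¹ *ᵥ x ≤ x ⬝ᵥ B⁻¹ *ᵥ x := by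
  set y := H⁻¹ *ᵥ x
  have hHy : H *ᵥ y = x := by
    simp [y, mulVec_mulVec, mul_nonsing_inv _ ((isUnit_iff_isUnit_det H).1 (hB.of_le_s17 hBH).isUnit)]
  have hgap : 0 ≤ y ⬝ᵥ (H - B) *ᵥ y := by simpa using hBH.dotProduct_mulVec_nonneg y
  rw [sub_mulVec, dotProduct_sub, hHy] at hgap
  have := hB.two_mul_dotProduct_sub_le_dotProduct_inv_mulVec x y
  rw [dotProduct_comm y x] at hgap this
  linarith

lemma PosDef.dotProduct_inv_mulVec_le_mul_of_le_smul {B H : Matrix ι ι ℝ} (hH : H.PosDef)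
    {c : ℝ} (hc : 0 < c) (hHB : H ≤ c • B) (x : ι → ℝ) :
    x ⬝ᵥ B⁻¹ *ᵥ x ≤ c * (x ⬝ᵥ H⁻¹ *ᵥ x) := by
  have hcB := hH.dotProduct_inv_mulVec_le_of_le hHB x
  have hB : IsUnit B.det := by
    simpa [hc.ne', isUnit_iff_isUnit_det] using ((hH.of_le_s17 hHB).smul (inv_pos.2 hc)).isUnit
  have hinv : (c • B)⁻¹ = c⁻¹ • B⁻¹ := by
    let := invertibleOfNonzero hc.ne'
    rw [inv_smul B c hB, invOf_eq_inv]
  rw [hinv, smul_mulVec, dotProduct_smul, smul_eq_mul] at hcB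
  rwa [inv_mul_le_iff₀ hc] at hcB

lemma dotProduct_inv_transpose_mul_diagonal_mul_add_mulVec_bounds (hC : C.PosSemidef)
    (hH : (Aᵀ * A + C).PosDef) (hD₁ : ∀ j, 1 / 2 ≤ D j) (hD₂ : ∀ j, D j ≤ 1) (x : ι → ℝ) :
    x ⬝ᵥ (Aᵀ * A + C)⁻¹ *ᵥ x ≤ x ⬝ᵥ (Aᵀ * diagonal D * A + C)⁻¹ *ᵥ x ∧
      x ⬝ᵥ (Aᵀ * diagonal D * A + C)⁻¹ *ᵥ x ≤ 2 * (x ⬝ᵥ (Aᵀ * A + C)⁻¹ *ᵥ x) := by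
  have hHB := le_two_smul_transpose_mul_diagonal_mul_add A hC hD₁
  have hB : (Aᵀ * diagonal D * A + C).PosDef := by
    simpa using (hH.of_le_s17 hHB).smul (inv_pos.2 (two_pos : (0 : ℝ) < 2))
  exact ⟨hB.dotProduct_inv_mulVec_le_of_le (transpose_mul_diagonal_mul_add_le A hD₂) x,
    hH.dotProduct_inv_mulVec_le_mul_of_le_smul two_pos hHB x⟩

end Matrix

/-- At `c = 0` both sides vanish, since then `a = 0` (and `x / 0 = 0`). -/
lemma div_eq_div_mul_mul_of_le {a c : ℝ} (b : ℝ) (ha : 0 ≤ a) (hac : a ≤ c) :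
    a / b = a / (b * c) * c := by
  rcases (ha.trans hac).eq_or_lt with rfl | hc
  · simp [le_antisymm hac ha]
  · field_simp

theorem self_consistent_D_bounds_general {n d : ℕ}
    (A : Matrix (Fin n) (Fin d) ℝ) (C : Matrix (Fin d) (Fin d) ℝ)
    (hC : C.PosSemidef) (hH : (Aᵀ * A + C).PosDef)
    (π : Fin n → ℝ) (hπ : ∀ i, 0 < π i)
    (ℓ : Fin n → ℝ) (hℓ : ∀ i, ℓ i = A i ⬝ᵥ ((Aᵀ * A + C)⁻¹ *ᵥ A i))
    (deff : ℝ) (hdeff : deff = ∑ i, ℓ i)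
    (ρmax ρmin : ℝ)
    (hρmax : ∀ i, ℓ i / (π i * deff) ≤ ρmax)
    (hρmin0 : 0 ≤ ρmin) (hρmin : ∀ i, ρmin ≤ ℓ i / (π i * deff))
    (m : ℝ) (hm : 0 < m)
    (D : Fin n → ℝ) (hDlb : ∀ i, 1 / 2 < D i) (hDub : ∀ i, D i ≤ 1)
    (hfix : ∀ i, D i =
      m / (m + (A i ⬝ᵥ ((Aᵀ * Matrix.diagonal D * A + C)⁻¹ *ᵥ A i)) / π i)) :
    ∀ i, m / (m + 2 * ρmax * deff) ≤ D i ∧ D i ≤ m / (m + ρmin * deff) := by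
  have hℓ0 : ∀ j, 0 ≤ ℓ j := fun j ↦ by
    simpa [hℓ j] using hH.inv.posSemidef.dotProduct_mulVec_nonneg (A j)
  have hdeff0 : 0 ≤ deff := hdeff ▸ Finset.sum_nonneg fun j _ ↦ hℓ0 j
  intro i
  set q := A i ⬝ᵥ (Aᵀ * diagonal D * A + C)⁻¹ *ᵥ A i
  obtain ⟨hℓq, hqℓ⟩ : ℓ i ≤ q ∧ q ≤ 2 * ℓ i := hℓ i ▸
    dotProduct_inv_transpose_mul_diagonal_mul_add_mulVec_bounds A hC hH (fun j ↦ (hDlb j).le)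
      hDub (A i)
  have hℓi : ℓ i / π i = ℓ i / (π i * deff) * deff := div_eq_div_mul_mul_of_le _ (hℓ0 i)
    (hdeff ▸ Finset.single_le_sum (fun j _ ↦ hℓ0 j) (Finset.mem_univ i))
  have hq_upper : q / π i ≤ 2 * ρmax * deff := calc
    q / π i ≤ 2 * (ℓ i / π i) := by rw [mul_div_assoc']; gcongr; exact (hπ i).le
    _ ≤ 2 * ρmax * deff := by rw [hℓi, mul_assoc]; gcongr; exact hρmax i
  have hq_lower : ρmin * deff ≤ q / π i := calc
    ρmin * deff ≤ ℓ i / π i := by rw [hℓi]; gcongr; exact hρmin i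
    _ ≤ q / π i := by gcongr; exact (hπ i).le
  have hρmin_deff : 0 ≤ ρmin * deff := mul_nonneg hρmin0 hdeff0
  rw [show D i = m / (m + q / π i) from hfix i]
  exact ⟨div_le_div_of_nonneg_left hm.le (by linarith) (by linarith),
    div_le_div_of_nonneg_left hm.le (by linarith) (by linarith)⟩

/-- Lemma D.2: bounds on the self-consistent diagonal matrix `D` of Theorem 1.
If `D` solves the fixed-point equations
`Dᵢᵢ = m/(m + aᵢᵀ(AᵀDA + C)⁻¹aᵢ/πᵢ)` with all `Dᵢᵢ ∈ (1/2, 1]`, then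
`m/(m + 2ρmax·d_eff) ≤ Dᵢᵢ ≤ m/(m + ρmin·d_eff)` for every `i`. -/
theorem self_consistent_D_bounds {n d : ℕ}
    (A : Matrix (Fin n) (Fin d) ℝ) (C : Matrix (Fin d) (Fin d) ℝ)
    (hC : C.PosSemidef) (hH : (Aᵀ * A + C).PosDef)
    (π : Fin n → ℝ) (hπ : ∀ i, 0 < π i) (hsum : ∑ i, π i = 1)
    (ℓ : Fin n → ℝ) (hℓ : ∀ i, ℓ i = A i ⬝ᵥ ((Aᵀ * A + C)⁻¹ *ᵥ A i))
    (deff : ℝ) (hdeff : deff = ∑ i, ℓ i)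
    (ρmax ρmin : ℝ)
    (hρmax : ∀ i, ℓ i / (π i * deff) ≤ ρmax)
    (hρmin0 : 0 ≤ ρmin) (hρmin : ∀ i, ρmin ≤ ℓ i / (π i * deff))
    (m : ℝ) (hm : 0 < m)
    (D : Fin n → ℝ) (hDlb : ∀ i, 1 / 2 < D i) (hDub : ∀ i, D i ≤ 1)
    (hfix : ∀ i, D i =
      m / (m + (A i ⬝ᵥ ((Aᵀ * Matrix.diagonal D * A + C)⁻¹ *ᵥ A i)) / π i)) :
    ∀ i, m / (m + 2 * ρmax * deff) ≤ D i ∧ D i ≤ m / (m + ρmin * deff) :=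
  self_consistent_D_bounds_general A C hC hH π hπ ℓ hℓ deff hdeff ρmax ρmin hρmax hρmin0 hρmin m hm
    D hDlb hDub hfix
end
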